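/- Let Λ be a finite-rank lattice, Z: Λ ⊗ ℝ → ℂ a real-linear map, and S ⊆ Λ \ {0} a subset with Z(v) ≠ 0 for all v ∈ S. Fix any norm ‖·‖ on Λ ⊗ ℝ. Then the following are equivalent: (1) there exists M > 0 such that ‖v‖ ≤ M·|Z(v)| for all v ∈ S; (2) there exists a quadratic form Q on Λ ⊗ ℝ such that Q is negative definite on ker(Z) and Q(v) ≥ 0 for all v ∈ S. -/

import Mathlib

/-!
(1) ⇒ (2): if `q` is the square of a Euclidean norm with `q ≤ C² ‖·‖²`, then `C²M² |Z|² - q`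
is negative on `ker Z ∖ {0}` and nonnegative on `S`.
(2) ⇒ (1): on the compact set of unit vectors where `Q ≥ 0`, the function `|Z|` does not vanish,
because `Q < 0` on the unit vectors of `ker Z`. Its minimum `ε > 0` gives `M = ε⁻¹` by homogeneity.
-/

theorem QuadraticMap.continuous_of_finiteDimensional {𝕜 V : Type*} [NontriviallyNormedField 𝕜]
    [CompleteSpace 𝕜] [CharZero 𝕜] [NormedAddCommGroup V] [NormedSpace 𝕜 V]
    [FiniteDimensional 𝕜 V] (Q : QuadraticForm 𝕜 V) : Continuous Q := by
  have hpolar : Continuous fun x => Q.polarBilin.toContinuousBilinearMap x x :=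
    Q.polarBilin.toContinuousBilinearMap.continuous₂.comp (continuous_id.prodMk continuous_id)
  refine (hpolar.div_const 2).congr fun x => ?_
  rw [LinearMap.toContinuousBilinearMap_apply, QuadraticMap.polarBilin_apply_apply,
    QuadraticMap.polar_self, two_smul]
  ring

theorem exists_quadraticForm_eq_norm_sq {V E : Type*} [AddCommGroup V] [Module ℝ V]
    [NormedAddCommGroup E] [InnerProductSpace ℝ E] (f : V →ₗ[ℝ] E) :
    ∃ q : QuadraticForm ℝ V, ∀ x, q x = ‖f x‖ ^ 2 :=
  ⟨(LinearMap.BilinMap.toQuadraticMap (innerₗ E)).comp f, fun _ => real_inner_self_eq_norm_sq _⟩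

section SupportProperty

variable {V E : Type*} [NormedAddCommGroup V] [NormedSpace ℝ V] [FiniteDimensional ℝ V]
  [NormedAddCommGroup E]

theorem exists_quadraticForm_neg_on_ker_of_norm_le_mul_norm [InnerProductSpace ℝ E]
    (Z : V →ₗ[ℝ] E) {T : Set V} {M : ℝ} (hT : ∀ x ∈ T, ‖x‖ ≤ M * ‖Z x‖) :
    ∃ Q : QuadraticForm ℝ V, (∀ w ∈ LinearMap.ker Z, w ≠ 0 → Q w < 0) ∧ ∀ x ∈ T, 0 ≤ Q x := by
  let e : V →L[ℝ] EuclideanSpace ℝ (Fin (Module.finrank ℝ V)) := (toEuclidean : V ≃L[ℝ] _)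
  obtain ⟨qZ, hqZ⟩ := exists_quadraticForm_eq_norm_sq Z
  obtain ⟨qe, hqe⟩ := exists_quadraticForm_eq_norm_sq e.toLinearMap
  refine ⟨(‖e‖ * M) ^ 2 • qZ - qe, fun w hw hw0 => ?_, fun x hx => ?_⟩
  · have hew : e w ≠ 0 := (toEuclidean.map_ne_zero_iff).2 hw0
    rw [LinearMap.mem_ker] at hw
    simp only [sub_apply, smul_apply, hqZ, hqe, ContinuousLinearMap.coe_coe, hw, smul_eq_mul,
      norm_zero]
    simpa using pow_pos (norm_pos_iff.2 hew) 2
  · have hex : ‖e x‖ ≤ ‖e‖ * M * ‖Z x‖ :=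
      calc ‖e x‖ ≤ ‖e‖ * ‖x‖ := e.le_opNorm x
        _ ≤ ‖e‖ * (M * ‖Z x‖) := mul_le_mul_of_nonneg_left (hT x hx) (norm_nonneg e)
        _ = ‖e‖ * M * ‖Z x‖ := by ring
    have hsq := pow_le_pow_left₀ (norm_nonneg _) hex 2
    simp only [sub_apply, smul_apply, hqZ, hqe, ContinuousLinearMap.coe_coe, smul_eq_mul]
    rw [mul_pow] at hsq
    linarith

theorem exists_norm_le_mul_norm_of_quadraticForm_nonneg [NormedSpace ℝ E] (Z : V →ₗ[ℝ] E)
    (Q : QuadraticForm ℝ V) (hQ : ∀ w ∈ LinearMap.ker Z, w ≠ 0 → Q w < 0) :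
    ∃ M > 0, ∀ x, 0 ≤ Q x → ‖x‖ ≤ M * ‖Z x‖ := by
  set K := Metric.sphere (0 : V) 1 ∩ {x | 0 ≤ Q x}
  have hK : IsCompact K := (isCompact_sphere 0 1).inter_right
    (isClosed_le continuous_const Q.continuous_of_finiteDimensional)
  have hZK : ∀ x ∈ K, 0 < ‖Z x‖ := by
    rintro x ⟨hx1, hxQ⟩
    have hx0 : x ≠ 0 := ne_zero_of_mem_unit_sphere ⟨x, hx1⟩
    exact norm_pos_iff.2 fun hZx => (hQ x hZx hx0).not_ge hxQ
  obtain ⟨ε, hε, hεK⟩ := hK.exists_forall_le'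
    (continuous_norm.comp Z.continuous_of_finiteDimensional).continuousOn hZK
  refine ⟨ε⁻¹, inv_pos.2 hε, fun x hxQ => ?_⟩
  rcases eq_or_ne x 0 with rfl | hx0
  · simp
  have hnx : 0 < ‖x‖ := norm_pos_iff.2 hx0
  have hunit : ‖x‖⁻¹ • x ∈ K := by
    refine ⟨by simp [norm_smul, hnx.ne'], ?_⟩
    simp only [Set.mem_ofPred_eq, QuadraticMap.map_smul, smul_eq_mul]
    positivity
  have := hεK _ hunit
  rw [Function.comp_apply, map_smul, norm_smul, norm_inv, norm_norm] at this
  rw [inv_mul_eq_div, le_div_iff₀ hε]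
  exact (le_inv_mul_iff₀ hnx).1 this

end SupportProperty

theorem stmt13_general (Λ : Type*) [AddCommGroup Λ]
    (V : Type*) [NormedAddCommGroup V] [NormedSpace ℝ V] [FiniteDimensional ℝ V]
    (ι : Λ →+ V)
    (Z : V →ₗ[ℝ] ℂ) (S : Set Λ) :
    (∃ M > 0, ∀ v ∈ S, ‖ι v‖ ≤ M * ‖Z (ι v)‖) ↔
      (∃ Q : QuadraticForm ℝ V,
        (∀ w ∈ LinearMap.ker Z, w ≠ 0 → Q w < 0) ∧ ∀ v ∈ S, 0 ≤ Q (ι v)) := by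
  constructor
  · rintro ⟨M, -, hM⟩
    obtain ⟨Q, hker, himage⟩ := exists_quadraticForm_neg_on_ker_of_norm_le_mul_norm Z
      (T := ι '' S) (Set.forall_mem_image.2 hM)
    exact ⟨Q, hker, fun v hv => himage _ (Set.mem_image_of_mem ι hv)⟩
  · rintro ⟨Q, hker, hS⟩
    obtain ⟨M, hM, hQZ⟩ := exists_norm_le_mul_norm_of_quadraticForm_nonneg Z Q hker
    exact ⟨M, hM, fun v hv => hQZ _ (hS v hv)⟩

/-- Equivalence of the two formulations of the support property for a
finite-rank lattice `Λ` with `Λ ⊗ ℝ` realized as a finite-dimensional real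
normed space `V` via `ι`. -/
theorem stmt13 (Λ : Type*) [AddCommGroup Λ] [Module.Free ℤ Λ] [Module.Finite ℤ Λ]
    (V : Type*) [NormedAddCommGroup V] [NormedSpace ℝ V] [FiniteDimensional ℝ V]
    (ι : Λ →+ V) (hspan : Submodule.span ℝ (Set.range ι) = ⊤)
    (Z : V →ₗ[ℝ] ℂ) (S : Set Λ) (hS0 : (0 : Λ) ∉ S)
    (hSZ : ∀ v ∈ S, Z (ι v) ≠ 0) :
    (∃ M > 0, ∀ v ∈ S, ‖ι v‖ ≤ M * ‖Z (ι v)‖) ↔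
      (∃ Q : QuadraticForm ℝ V,
        (∀ w ∈ LinearMap.ker Z, w ≠ 0 → Q w < 0) ∧ ∀ v ∈ S, 0 ≤ Q (ι v)) :=
  stmt13_general Λ V ι Z S
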